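/- arXiv:1003.3534 — 2 statements merged into one kernel-verified Lean document; each statement's English description precedes it below -/
import Mathlib

section
/- Let (D_t)_{t≥0} be the Kingman coalescent started from n particles, i.e. a pure death chain on {1,…,n} jumping from k to k−1 at rate C(k,2). Then for 1 ≤ k ≤ n, P(D_t = k) = ∑_{j=k}^{n} [(−1)^{j+k}(2j−1)(j+k−2)!·C(n,j)] / [k!(k−1)!(j−k)!·C(n+j−1,j)] · exp(−t·C(j,2)). -/
/-!
`kingmanMarginal n k t = ∑_{j=k}^n c_{j,k} e^{-t C(j,2)}` (with `c = kingmanCoeff n`) solves the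
same forward equations as `q`, since `C(k+1,2) c_{j,k+1} = (C(k,2) - C(j,2)) c_{j,k}`. At `t = 0`
it equals `δ_{k,n}`: up to a factor depending only on `n` and `k`, `∑_j c_{j,k}` is
`∑_i (-1)^i C(m,i) (a+2i) / (a+i)^{(m+1)}` with `a = 2k-1`, `m = n-k` and `x^{(r)}` the rising
factorial. Splitting `a + 2i = (a + i) + i` turns it into two instances of the finite-difference
formula `Δ^M [1/x^{(N+1)}] = (-1)^M (N+M)!/N! · 1/x^{(N+M+1)}`, which cancel when `m ≥ 1`.
The forward equations are triangular, so descending from `k = n + 1`, where both sides vanish,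
each `q · k` is the unique solution of a scalar linear ODE with known forcing term.
-/

open Finset Nat Real

theorem ascPochhammer_succ_eval_left {S : Type*} [CommSemiring S] (n : ℕ) (x : S) :
    (ascPochhammer S (n + 1)).eval x = x * (ascPochhammer S n).eval (x + 1) := by
  simp [ascPochhammer_succ_left, Polynomial.eval_comp]

theorem sum_range_alternating_choose_succ {R : Type*} [CommRing R] (M : ℕ) (g : ℕ → R) :
    ∑ i ∈ range (M + 2), (-1) ^ i * ((M + 1).choose i : R) * g i
      = ∑ i ∈ range (M + 1), (-1) ^ i * (M.choose i : R) * (g i - g (i + 1)) := by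
  have hM : ∑ i ∈ range (M + 2), (-1) ^ i * (M.choose i : R) * g i
      = ∑ i ∈ range (M + 1), (-1) ^ i * (M.choose i : R) * g i := by
    simp [sum_range_succ _ (M + 1)]
  calc _ = ∑ i ∈ range (M + 2), (-1) ^ i * (M.choose i : R) * g i
        - ∑ i ∈ range (M + 1), (-1) ^ i * (M.choose i : R) * g (i + 1) := by
        rw [sum_range_succ', sum_range_succ' _ (M + 1)]
        simp only [pow_succ, mul_neg, mul_one, choose_succ_succ, cast_add, mul_add, neg_mul,
          add_mul, sum_add_distrib, sum_neg_distrib, pow_zero, choose_zero_right, cast_one, one_mul]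
        ring
    _ = _ := by
      rw [hM, ← sum_sub_distrib]
      exact sum_congr rfl fun i _ => by ring

theorem sum_range_alternating_choose_mul_index {R : Type*} [CommRing R] (M : ℕ) (g : ℕ → R) :
    ∑ i ∈ range (M + 2), (-1) ^ i * ((M + 1).choose i : R) * i * g i
      = -(M + 1) * ∑ i ∈ range (M + 1), (-1) ^ i * (M.choose i : R) * g (i + 1) := by
  rw [sum_range_succ', mul_sum]
  simp only [Nat.cast_zero, mul_zero, zero_mul, add_zero]
  refine sum_congr rfl fun i _ => ?_
  have h := congrArg (Nat.cast (R := R)) (Nat.add_one_mul_choose_eq M i)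
  push_cast at h
  push_cast
  linear_combination (-1) ^ i * g (i + 1) * h

theorem sum_range_alternating_choose_div_ascPochhammer (N M : ℕ) {x : ℝ} (hx : 0 < x) :
    ∑ i ∈ range (M + 1),
        (-1) ^ i * (M.choose i : ℝ) * ((ascPochhammer ℝ (N + 1)).eval (x + i))⁻¹
      = (N + M)! / (N ! * (ascPochhammer ℝ (N + M + 1)).eval x) := by
  induction M generalizing x with
  | zero => simp [field]
  | succ M ih =>
    rw [show M + 1 + 1 = M + 2 from rfl, sum_range_alternating_choose_succ]
    have hsplit : ∑ i ∈ range (M + 1), (-1) ^ i * (M.choose i : ℝ)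
          * (((ascPochhammer ℝ (N + 1)).eval (x + i))⁻¹
            - ((ascPochhammer ℝ (N + 1)).eval (x + (i + 1 : ℕ)))⁻¹)
        = ∑ i ∈ range (M + 1), (-1) ^ i * (M.choose i : ℝ)
            * ((ascPochhammer ℝ (N + 1)).eval (x + i))⁻¹
          - ∑ i ∈ range (M + 1), (-1) ^ i * (M.choose i : ℝ)
            * ((ascPochhammer ℝ (N + 1)).eval (x + 1 + i))⁻¹ := by
      rw [← sum_sub_distrib]
      refine sum_congr rfl fun i _ => ?_
      rw [Nat.cast_succ, ← add_assoc, add_right_comm, mul_sub]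
    have hP : 0 < (ascPochhammer ℝ (N + M + 1)).eval x := ascPochhammer_pos _ _ hx
    have hP1 : 0 < (ascPochhammer ℝ (N + M + 1)).eval (x + 1) :=
      ascPochhammer_pos _ _ (by positivity)
    have hrel := ascPochhammer_succ_eval_left (N + M + 1) x
    rw [ascPochhammer_succ_eval] at hrel
    push_cast at hrel
    rw [hsplit, ih hx, ih (by positivity), show N + (M + 1) = N + M + 1 from rfl, factorial_succ,
      ascPochhammer_succ_eval (N + M + 1) x]
    field_simp
    push_cast
    linear_combination (-(N + M)! : ℝ) * hrel

theorem sum_range_alternating_choose_mul_div_ascPochhammer_eq_zero (M : ℕ) {a : ℝ}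
    (ha : 0 < a) :
    ∑ i ∈ range (M + 2),
      (-1) ^ i * ((M + 1).choose i : ℝ) * ((a + 2 * i) / (ascPochhammer ℝ (M + 2)).eval (a + i))
      = 0 := by
  have hsplit : ∀ i : ℕ, (a + 2 * i) / (ascPochhammer ℝ (M + 2)).eval (a + i)
      = ((ascPochhammer ℝ (M + 1)).eval (a + 1 + i))⁻¹
        + i * ((ascPochhammer ℝ (M + 2)).eval (a + i))⁻¹ := by
    intro i
    have hP : 0 < (ascPochhammer ℝ (M + 1)).eval (a + 1 + i) :=
      ascPochhammer_pos _ _ (by positivity)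
    rw [ascPochhammer_succ_eval_left, add_right_comm]
    field_simp
    ring
  simp only [hsplit, mul_add, sum_add_distrib, ← mul_assoc]
  rw [sum_range_alternating_choose_div_ascPochhammer M (M + 1) (by positivity),
    sum_range_alternating_choose_mul_index]
  simp only [Nat.cast_succ, ← add_assoc, add_right_comm a _ 1]
  rw [sum_range_alternating_choose_div_ascPochhammer (M + 1) M (by positivity),
    show M + 1 + M = M + M + 1 by ring, factorial_succ M]
  have hP : 0 < (ascPochhammer ℝ (M + M + 1 + 1)).eval (a + 1) :=
    ascPochhammer_pos _ _ (by positivity)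
  field_simp
  push_cast
  ring

noncomputable def kingmanCoeff (n j k : ℕ) : ℝ :=
  (-1) ^ (j + k) * (2 * j - 1) * (j + k - 2)! * n.choose j
    / (k ! * (k - 1)! * (j - k)! * (n + j - 1).choose j)

theorem kingmanCoeff_add (n k i : ℕ) (hk : 1 ≤ k) (hin : k + i ≤ n) :
    kingmanCoeff n (k + i) k = n ! * (n - 1)! / (k ! * (k - 1)! * (n - k)!)
      * ((-1) ^ i * ((n - k).choose i : ℝ) * ((2 * k - 1 + 2 * i)
        / (ascPochhammer ℝ (n - k + 1)).eval (2 * (k : ℝ) - 1 + i))) := by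
  have hP := factorial_mul_ascPochhammer ℝ (2 * k - 2 + i) (n - k + 1)
  rw [show 2 * k - 2 + i + (n - k + 1) = n + k + i - 1 by omega,
    show ((2 * k - 2 + i : ℕ) : ℝ) + 1 = 2 * k - 1 + i by
      rw [Nat.cast_add, Nat.cast_sub (by omega)]; push_cast; ring] at hP
  rw [mul_comm, ← eq_div_iff (by positivity)] at hP
  have hsign : (-1 : ℝ) ^ (k + i + k) = (-1) ^ i := by
    rw [show k + i + k = 2 * k + i by ring, pow_add, pow_mul]; norm_num
  unfold kingmanCoeff
  rw [hsign, show k + i + k - 2 = 2 * k - 2 + i by omega, Nat.add_sub_cancel_left,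
    Nat.cast_choose ℝ hin, Nat.cast_choose ℝ (show k + i ≤ n + (k + i) - 1 by omega),
    Nat.cast_choose ℝ (show i ≤ n - k by omega), show n - (k + i) = n - k - i by omega,
    show n + (k + i) - 1 - (k + i) = n - 1 by omega, show n + (k + i) - 1 = n + k + i - 1 by omega,
    hP]
  field_simp
  push_cast
  ring

theorem kingmanCoeff_self {n : ℕ} (hn : 1 ≤ n) : kingmanCoeff n n n = 1 := by
  have h := kingmanCoeff_add n n 0 hn le_rfl
  have h2n : (2 * n - 1 : ℝ) ≠ 0 := by
    have : (1 : ℝ) ≤ n := by exact_mod_cast hn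
    linarith
  simp only [add_zero, Nat.sub_self, zero_add, ascPochhammer_one, Polynomial.eval_X, Nat.cast_zero,
    mul_zero, Nat.choose_self, factorial_zero, pow_zero, Nat.cast_one, mul_one, one_mul] at h
  rw [h]
  field_simp

theorem sum_kingmanCoeff_eq_zero {n k : ℕ} (hk : 1 ≤ k) (hkn : k < n) :
    ∑ j ∈ Icc k n, kingmanCoeff n j k = 0 := by
  obtain ⟨M, hM⟩ : ∃ M, n - k = M + 1 := ⟨n - k - 1, by omega⟩
  rw [← Finset.Ico_add_one_right_eq_Icc, sum_Ico_eq_sum_range, show n + 1 - k = M + 2 by omega]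
  have hterm : ∀ i ∈ range (M + 2), kingmanCoeff n (k + i) k
      = n ! * (n - 1)! / (k ! * (k - 1)! * (n - k)!) * ((-1) ^ i * ((M + 1).choose i : ℝ)
        * ((2 * k - 1 + 2 * i) / (ascPochhammer ℝ (M + 2)).eval (2 * (k : ℝ) - 1 + i))) := by
    intro i hi
    rw [kingmanCoeff_add n k i hk (by rw [mem_range] at hi; omega), hM]
  have hk' : (0 : ℝ) < 2 * k - 1 := by
    have : (1 : ℝ) ≤ k := by exact_mod_cast hk
    linarith
  rw [sum_congr rfl hterm, ← mul_sum,
    sum_range_alternating_choose_mul_div_ascPochhammer_eq_zero M hk', mul_zero]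

theorem choose_two_mul_kingmanCoeff_succ {n k j : ℕ} (hk : 1 ≤ k) (hkj : k + 1 ≤ j)
    (hjn : j ≤ n) :
    ((k + 1).choose 2 : ℝ) * kingmanCoeff n j (k + 1)
      = ((k.choose 2 : ℝ) - j.choose 2) * kingmanCoeff n j k := by
  have hn : (n + j - 1).choose j ≠ 0 := (Nat.choose_pos (by omega)).ne'
  obtain ⟨k, rfl⟩ := Nat.exists_eq_add_of_le' hk
  obtain ⟨m, rfl⟩ := Nat.exists_eq_add_of_le hkj
  unfold kingmanCoeff
  rw [show k + 1 + 1 + m + (k + 1 + 1) - 2 = 2 * k + m + 1 + 1 by omega,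
    show k + 1 + 1 + m + (k + 1) - 2 = 2 * k + m + 1 by omega,
    show k + 1 + 1 + m - (k + 1) = m + 1 by omega, show k + 1 + 1 + m - (k + 1 + 1) = m by omega,
    Nat.add_sub_cancel, Nat.add_sub_cancel, factorial_succ (2 * k + m + 1), factorial_succ m,
    factorial_succ (k + 1), factorial_succ k,
    show k + 1 + 1 + m + (k + 1 + 1) = k + 1 + 1 + m + (k + 1) + 1 by ring, pow_succ,
    Nat.cast_choose_two, Nat.cast_choose_two, Nat.cast_choose_two]
  push_cast
  field_simp
  ring

noncomputable def kingmanMarginal (n k : ℕ) (t : ℝ) : ℝ :=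
  ∑ j ∈ Icc k n, kingmanCoeff n j k * exp (-t * (j.choose 2 : ℝ))

theorem kingmanMarginal_of_lt {n k : ℕ} (h : n < k) (t : ℝ) : kingmanMarginal n k t = 0 := by
  rw [kingmanMarginal, Icc_eq_empty_of_lt h, sum_empty]

theorem kingmanMarginal_zero {n k : ℕ} (hk : 1 ≤ k) :
    kingmanMarginal n k 0 = if k = n then 1 else 0 := by
  simp only [kingmanMarginal, neg_zero, zero_mul, exp_zero, mul_one]
  rcases lt_trichotomy k n with hkn | rfl | hnk
  · rw [sum_kingmanCoeff_eq_zero hk hkn, if_neg hkn.ne]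
  · rw [Icc_self, sum_singleton, kingmanCoeff_self hk, if_pos rfl]
  · rw [Icc_eq_empty_of_lt hnk, sum_empty, if_neg hnk.ne']

theorem hasDerivAt_kingmanMarginal {n k : ℕ} (hk : 1 ≤ k) (hkn : k ≤ n) (t : ℝ) :
    HasDerivAt (kingmanMarginal n k)
      ((k + 1).choose 2 * kingmanMarginal n (k + 1) t - k.choose 2 * kingmanMarginal n k t)
      t := by
  have hterm : ∀ j ∈ Icc k n,
      HasDerivAt (fun s => kingmanCoeff n j k * exp (-s * (j.choose 2 : ℝ)))
        (kingmanCoeff n j k * (exp (-t * (j.choose 2 : ℝ)) * -(j.choose 2 : ℝ))) t := fun j _ =>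
    ((((hasDerivAt_id t).neg.mul_const _).exp).const_mul _).congr_deriv (by simp)
  refine (HasDerivAt.fun_sum hterm).congr_deriv ?_
  have hshift : ∑ j ∈ Icc (k + 1) n,
        ((k + 1).choose 2 : ℝ) * (kingmanCoeff n j (k + 1) * exp (-t * j.choose 2))
      = ∑ j ∈ Icc (k + 1) n, (k.choose 2 * (kingmanCoeff n j k * exp (-t * j.choose 2))
        + kingmanCoeff n j k * (exp (-t * j.choose 2) * -(j.choose 2 : ℝ))) :=
    sum_congr rfl fun j hj => by
      rw [mem_Icc] at hj
      rw [← mul_assoc, choose_two_mul_kingmanCoeff_succ hk hj.1 hj.2]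
      ring
  rw [kingmanMarginal, kingmanMarginal, mul_sum, hshift, ← insert_Icc_add_one_left_eq_Icc hkn,
    sum_insert (by simp), sum_insert (by simp), sum_add_distrib, ← mul_sum]
  ring

theorem eq_mul_exp_of_hasDerivWithinAt_Ici {g : ℝ → ℝ} {c : ℝ}
    (hg : ∀ t ≥ 0, HasDerivWithinAt g (-(c * g t)) (Set.Ici 0) t) {t : ℝ} (ht : 0 ≤ t) :
    g t = g 0 * exp (-(c * t)) := by
  set h : ℝ → ℝ := fun s => g s * exp (c * s)
  have hh : ∀ s ≥ 0, HasDerivWithinAt h 0 (Set.Ici 0) s := fun s hs => by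
    have hexp : HasDerivAt (fun s => exp (c * s)) (exp (c * s) * c) s := by
      simpa using ((hasDerivAt_id s).const_mul c).exp
    exact ((hg s hs).mul hexp.hasDerivWithinAt).congr_deriv (by ring)
  have hconst := constant_of_has_deriv_right_zero
    (fun x hx => ((hh x hx.1).continuousWithinAt).mono Set.Icc_subset_Ici_self)
    (fun x hx => (hh x hx.1).mono (Set.Ici_subset_Ici.mpr hx.1)) t (Set.right_mem_Icc.mpr ht)
  simp only [h, mul_zero, exp_zero, mul_one] at hconst
  rw [← hconst, mul_assoc, ← exp_add, add_neg_cancel, exp_zero, mul_one]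

theorem eq_kingmanMarginal_of_hasDerivWithinAt {n k : ℕ} (hk : 1 ≤ k) (hkn : k ≤ n)
    {p : ℝ → ℝ}
    (h0 : p 0 = kingmanMarginal n k 0)
    (hp : ∀ t ≥ 0, HasDerivWithinAt p
      ((k + 1).choose 2 * kingmanMarginal n (k + 1) t - k.choose 2 * p t) (Set.Ici 0) t)
    {t : ℝ} (ht : 0 ≤ t) : p t = kingmanMarginal n k t := by
  have hdiff : ∀ s ≥ 0, HasDerivWithinAt (fun s => p s - kingmanMarginal n k s)
      (-(k.choose 2 * (p s - kingmanMarginal n k s))) (Set.Ici 0) s := fun s hs =>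
    ((hp s hs).sub (hasDerivAt_kingmanMarginal hk hkn s).hasDerivWithinAt).congr_deriv (by ring)
  have := eq_mul_exp_of_hasDerivWithinAt_Ici hdiff ht
  rw [h0, sub_self, zero_mul] at this
  linarith

theorem stmt13_general (n : ℕ) (q : ℝ → ℕ → ℝ)
    (hq0 : q 0 n = 1) (hq0' : ∀ k, k ≠ n → q 0 k = 0)
    (hzero : ∀ t ≥ (0 : ℝ), ∀ k, n < k → q t k = 0)
    (hkolmogorov : ∀ k, 1 ≤ k → k ≤ n → ∀ t ≥ (0 : ℝ),
      HasDerivWithinAt (fun s => q s k)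
        (((k + 1).choose 2 : ℝ) * q t (k + 1) - (k.choose 2 : ℝ) * q t k)
        (Set.Ici 0) t) :
    ∀ k, 1 ≤ k → k ≤ n → ∀ t ≥ (0 : ℝ),
      q t k = ∑ j ∈ Finset.Icc k n,
        ((-1 : ℝ) ^ (j + k) * (2 * (j : ℝ) - 1) * (Nat.factorial (j + k - 2) : ℝ)
            * (n.choose j : ℝ))
          / ((Nat.factorial k : ℝ) * (Nat.factorial (k - 1) : ℝ)
            * (Nat.factorial (j - k) : ℝ) * ((n + j - 1).choose j : ℝ))
          * Real.exp (-t * (j.choose 2 : ℝ)) := by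
  suffices h : ∀ k ≤ n + 1, 1 ≤ k → ∀ t ≥ (0 : ℝ), q t k = kingmanMarginal n k t from
    fun k hk hkn t ht => h k (by omega) hk t ht
  intro k hk
  induction hk using Nat.decreasingInduction with
  | self =>
    intro _ t ht
    rw [hzero t ht _ n.lt_succ_self, kingmanMarginal_of_lt n.lt_succ_self]
  | of_succ k hkn ih =>
    intro hk t ht
    refine eq_kingmanMarginal_of_hasDerivWithinAt (p := fun s => q s k) hk
      (Nat.le_of_lt_succ hkn) ?_ (fun s hs => ?_) ht
    · rw [kingmanMarginal_zero hk]
      split_ifs with h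
      · rw [h, hq0]
      · exact hq0' k h
    · rw [← ih (by omega) s hs]
      exact hkolmogorov k hk (by omega) s hs

/-- Kingman's coalescent started from `n` particles: the pure death chain on `{1,…,n}`
jumping from `k` to `k-1` at rate `C(k,2)`, described by its marginals
`q t k = P(D_t = k)` via the Kolmogorov forward equations.  Then for `1 ≤ k ≤ n` and
`t ≥ 0`,
`P(D_t = k) = ∑_{j=k}^n [(-1)^{j+k}(2j-1)(j+k-2)!·C(n,j)] /
  [k!(k-1)!(j-k)!·C(n+j-1,j)] · exp(-t·C(j,2))`. -/
theorem stmt13 (n : ℕ) (hn : 1 ≤ n) (q : ℝ → ℕ → ℝ)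
    (hq0 : q 0 n = 1) (hq0' : ∀ k, k ≠ n → q 0 k = 0)
    (hzero : ∀ t ≥ (0 : ℝ), ∀ k, n < k → q t k = 0)
    (hkolmogorov : ∀ k, 1 ≤ k → k ≤ n → ∀ t ≥ (0 : ℝ),
      HasDerivWithinAt (fun s => q s k)
        (((k + 1).choose 2 : ℝ) * q t (k + 1) - (k.choose 2 : ℝ) * q t k)
        (Set.Ici 0) t) :
    ∀ k, 1 ≤ k → k ≤ n → ∀ t ≥ (0 : ℝ),
      q t k = ∑ j ∈ Finset.Icc k n,
        ((-1 : ℝ) ^ (j + k) * (2 * (j : ℝ) - 1) * (Nat.factorial (j + k - 2) : ℝ)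
            * (n.choose j : ℝ))
          / ((Nat.factorial k : ℝ) * (Nat.factorial (k - 1) : ℝ)
            * (Nat.factorial (j - k) : ℝ) * ((n + j - 1).choose j : ℝ))
          * Real.exp (-t * (j.choose 2 : ℝ)) :=
  stmt13_general n q hq0 hq0' hzero hkolmogorov
end

section
/- With the notation of the free product walk: Ĝ_β → Ĝ as β → 0⁺; i.e. the expected number of returns to the identity of the random walk on ℤ^d * ℤ_2 with ℤ_2-step probability β converges, as β → 0, to the expected number of returns to 0 of the walk on ℤ^d. -/
open scoped Classical

/-- `n`-step distribution of the right random walk with step distribution `step` on a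
group `G`, starting from the identity. -/
noncomputable def convPow {G : Type*} [Group G] (step : G → ℝ) : ℕ → G → ℝ
  | 0 => fun g => if g = 1 then 1 else 0
  | n + 1 => fun g => ∑' h : G, convPow step n h * step (h⁻¹ * g)

/-- Step distribution of the walk on `ℤ^d ∗ ℤ₂` taking the `ℤ₂` generator with
probability `β` and a `stepY`-distributed `ℤ^d`-step with probability `1 - β`. -/
noncomputable def coprodStep (d : ℕ) (β : ℝ) (stepY : Multiplicative (Fin d → ℤ) → ℝ) :
    Monoid.Coprod (Multiplicative (Fin d → ℤ)) (Multiplicative (ZMod 2)) → ℝ :=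
  fun g =>
    β * (if g = Monoid.Coprod.inr (Multiplicative.ofAdd (1 : ZMod 2)) then 1 else 0)
      + (1 - β) * ∑' z : Multiplicative (Fin d → ℤ),
          if g = Monoid.Coprod.inl z then stepY z else 0

/-!
Squeeze `Ĝ_β` between two quantities tending to `Ĝ`. Under the projection `fst : ℤ^d ∗ ℤ₂ → ℤ^d`
a step of `X^β` is trivial with probability `β` and a `Y`-step otherwise. A Green function is the
least `F` with `δ₁ + F ∗ μ ≤ F`, and this makes `(1 - β)⁻¹ Ĝ(fst ·)` such an `F` for `X^β`, so
`Ĝ_β ≤ Ĝ / (1 - β)`. Conversely, the paths that never use the `ℤ₂` generator give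
`∑ₙ (1 - β)ⁿ P(Yₙ = 0) ≤ Ĝ_β`, and the left side tends to `Ĝ` by Abel's theorem.
-/

open scoped ENNReal
open Filter Topology Function

section Group

variable {G : Type*} [Group G]

-- `convPow` with values in `ℝ≥0∞`, where sums can be exchanged freely.
noncomputable def eConvPow (μ : G → ℝ≥0∞) : ℕ → G → ℝ≥0∞
  | 0 => fun g => if g = 1 then 1 else 0
  | n + 1 => fun g => ∑' h : G, eConvPow μ n h * μ (h⁻¹ * g)

noncomputable def eGreen (μ : G → ℝ≥0∞) (g : G) : ℝ≥0∞ :=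
  ∑' n, eConvPow μ n g

variable (μ : G → ℝ≥0∞)

lemma eConvPow_zero (g : G) : eConvPow μ 0 g = if g = 1 then 1 else 0 := rfl

lemma eConvPow_succ (n : ℕ) (g : G) :
    eConvPow μ (n + 1) g = ∑' k, eConvPow μ n (g / k) * μ k := by
  refine ((Equiv.divLeft g).tsum_eq fun h => eConvPow μ n h * μ (h⁻¹ * g)).symm.trans ?_
  simp [inv_div]

lemma tsum_eConvPow (n : ℕ) : ∑' g, eConvPow μ n g = (∑' g, μ g) ^ n := by
  induction n with
  | zero => simp [eConvPow_zero]
  | succ n ih =>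
    calc ∑' g, eConvPow μ (n + 1) g = ∑' k, (∑' g, eConvPow μ n (g / k)) * μ k := by
          simp_rw [eConvPow_succ, ← ENNReal.tsum_mul_right]
          exact ENNReal.tsum_comm
      _ = (∑' g, μ g) ^ (n + 1) := by
          have hshift (k : G) : ∑' g, eConvPow μ n (g / k) = ∑' g, eConvPow μ n g :=
            (Equiv.divRight k).tsum_eq _
          simp_rw [hshift, ih, ENNReal.tsum_mul_left, pow_succ]

lemma eConvPow_ne_top {μ : G → ℝ≥0∞} (hμ : ∑' g, μ g ≤ 1) (n : ℕ) (g : G) :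
    eConvPow μ n g ≠ ∞ :=
  ne_top_of_le_ne_top ENNReal.one_ne_top <|
    (ENNReal.le_tsum g).trans ((tsum_eConvPow μ n).trans_le (pow_le_one' hμ n))

lemma eGreen_eq (g : G) :
    eGreen μ g = (if g = 1 then 1 else 0) + ∑' k, eGreen μ (g / k) * μ k := by
  rw [eGreen, tsum_eq_zero_add' ENNReal.summable]
  simp only [eConvPow_succ, eGreen, ← ENNReal.tsum_mul_right]
  rw [ENNReal.tsum_comm, eConvPow_zero]

lemma eGreen_le_of_supersolution {F : G → ℝ≥0∞}
    (hF : ∀ g, (if g = 1 then 1 else 0) + ∑' k, F (g / k) * μ k ≤ F g) (g : G) :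
    eGreen μ g ≤ F g := by
  refine ENNReal.tsum_le_of_sum_range_le fun N => ?_
  induction N generalizing g with
  | zero => simp
  | succ N ih =>
    calc ∑ n ∈ Finset.range (N + 1), eConvPow μ n g
        = (if g = 1 then 1 else 0) + ∑' k, (∑ n ∈ Finset.range N, eConvPow μ n (g / k)) * μ k := by
          simp_rw [Finset.sum_range_succ', eConvPow_succ, Finset.sum_mul,
            ← Summable.tsum_finsetSum fun _ _ => ENNReal.summable, eConvPow_zero, add_comm]
      _ ≤ (if g = 1 then 1 else 0) + ∑' k, F (g / k) * μ k := by
          gcongr with k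
          exact ih (g / k)
      _ ≤ F g := hF g

lemma pow_mul_eConvPow_le_of_injective {H : Type*} [Group H] {ι : H →* G} (hι : Injective ι)
    {μ : H → ℝ≥0∞} {ν : G → ℝ≥0∞} {c : ℝ≥0∞} (hμν : ∀ x, c * μ x ≤ ν (ι x)) (n : ℕ) (x : H) :
    c ^ n * eConvPow μ n x ≤ eConvPow ν n (ι x) := by
  induction n generalizing x with
  | zero => simp [eConvPow_zero, map_eq_one_iff ι hι]
  | succ n ih =>
    calc c ^ (n + 1) * eConvPow μ (n + 1) x
        = ∑' k, c ^ n * eConvPow μ n (x / k) * (c * μ k) := by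
          rw [eConvPow_succ, ← ENNReal.tsum_mul_left]
          exact tsum_congr fun k => by ring
      _ ≤ ∑' k, eConvPow ν n (ι x / ι k) * ν (ι k) := by
          gcongr with k
          · rw [← map_div]
            exact ih _
          · exact hμν k
      _ ≤ eConvPow ν (n + 1) (ι x) := by
          rw [eConvPow_succ]
          exact ENNReal.tsum_comp_le_tsum_of_injective hι fun k => eConvPow ν n (ι x / k) * ν k

end Group

section Coprod

open Monoid.Coprod

variable {M N : Type*} [Group M] [Group N]

noncomputable def eCoprodStep (b : ℝ≥0∞) (a : N) (μ : M → ℝ≥0∞) : Monoid.Coprod M N → ℝ≥0∞ :=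
  fun g => b * (if g = inr a then 1 else 0) + (1 - b) * ∑' z, if g = inl z then μ z else 0

variable (b : ℝ≥0∞) (a : N) (μ : M → ℝ≥0∞)

lemma tsum_mul_eCoprodStep (F : Monoid.Coprod M N → ℝ≥0∞) :
    ∑' g, F g * eCoprodStep b a μ g = b * F (inr a) + (1 - b) * ∑' z, F (inl z) * μ z := by
  simp only [eCoprodStep, mul_add, ENNReal.tsum_add, mul_left_comm (F _), ← ENNReal.tsum_mul_left,
    mul_ite, mul_one, mul_zero, tsum_ite_eq]
  rw [ENNReal.tsum_comm]
  simp [mul_comm]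

lemma tsum_eCoprodStep : ∑' g, eCoprodStep b a μ g = b + (1 - b) * ∑' z, μ z := by
  simpa using tsum_mul_eCoprodStep b a μ 1

lemma pow_mul_eConvPow_le_eConvPow_eCoprodStep (n : ℕ) (z : M) :
    (1 - b) ^ n * eConvPow μ n z ≤ eConvPow (eCoprodStep b a μ) n (inl z) := by
  refine pow_mul_eConvPow_le_of_injective inl_injective (fun x => ?_) n z
  simp [eCoprodStep, inl_injective.eq_iff]

lemma eGreen_eCoprodStep_le {b : ℝ≥0∞} (hb : b < 1) (g : Monoid.Coprod M N) :
    eGreen (eCoprodStep b a μ) g ≤ (1 - b)⁻¹ * eGreen μ (fst g) := by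
  have hc0 : 1 - b ≠ 0 := (tsub_pos_of_lt hb).ne'
  have hctop : 1 - b ≠ ∞ := ENNReal.sub_ne_top ENNReal.one_ne_top
  refine eGreen_le_of_supersolution _ (F := fun g => (1 - b)⁻¹ * eGreen μ (fst g)) (fun g => ?_) g
  set x := fst g
  have hδ : (if g = 1 then 1 else 0 : ℝ≥0∞) ≤ if x = 1 then 1 else 0 := by
    split_ifs with hg hx <;> simp_all [x]
  calc (if g = 1 then 1 else 0) + ∑' k, (1 - b)⁻¹ * eGreen μ (fst (g / k)) * eCoprodStep b a μ k
      = (if g = 1 then 1 else 0) + (b * ((1 - b)⁻¹ * eGreen μ x)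
          + ((1 - b) * (1 - b)⁻¹) * ∑' z, eGreen μ (x / z) * μ z) := by
        simp only [tsum_mul_eCoprodStep, map_div, fst_apply_inl, fst_apply_inr, div_one, x]
        simp_rw [mul_assoc, ENNReal.tsum_mul_left]
    _ ≤ b * ((1 - b)⁻¹ * eGreen μ x)
          + ((if x = 1 then 1 else 0) + ∑' z, eGreen μ (x / z) * μ z) := by
        rw [ENNReal.mul_inv_cancel hc0 hctop, one_mul, add_left_comm]
        gcongr
    _ = (b + (1 - b)) * (1 - b)⁻¹ * eGreen μ x := by
        rw [← eGreen_eq, add_mul, add_mul, ENNReal.mul_inv_cancel hc0 hctop, one_mul, mul_assoc]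
    _ = (1 - b)⁻¹ * eGreen μ x := by
        rw [add_tsub_cancel_of_le hb.le, one_mul]

end Coprod

section RealStep

lemma tsum_ofReal_eq_one {α : Type*} {f : α → ℝ} (hnn : ∀ i, 0 ≤ f i) (hf : ∑' i, f i = 1) :
    ∑' i, ENNReal.ofReal (f i) = 1 := by
  have hsumm : Summable f := by
    by_contra h
    simp [tsum_eq_zero_of_not_summable h] at hf
  rw [← ENNReal.ofReal_tsum_of_nonneg hnn hsumm, hf, ENNReal.ofReal_one]

variable {G : Type*} [Group G] {step : G → ℝ}

lemma convPow_eq_toReal_eConvPow (hnn : ∀ g, 0 ≤ step g)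
    (hstep : ∑' g, ENNReal.ofReal (step g) ≤ 1) (n : ℕ) (g : G) :
    convPow step n g = (eConvPow (fun g => ENNReal.ofReal (step g)) n g).toReal := by
  induction n generalizing g with
  | zero => by_cases hg : g = 1 <;> simp [convPow, eConvPow_zero, hg]
  | succ n ih =>
    rw [eConvPow, ENNReal.tsum_toReal_eq fun h =>
      ENNReal.mul_ne_top (eConvPow_ne_top hstep n h) ENNReal.ofReal_ne_top]
    simp [convPow, ih, ENNReal.toReal_ofReal (hnn _)]

lemma tsum_convPow_eq_toReal_eGreen (hnn : ∀ g, 0 ≤ step g)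
    (hstep : ∑' g, ENNReal.ofReal (step g) ≤ 1) (g : G) :
    ∑' n, convPow step n g = (eGreen (fun g => ENNReal.ofReal (step g)) g).toReal := by
  simp_rw [convPow_eq_toReal_eConvPow hnn hstep, eGreen,
    ENNReal.tsum_toReal_eq fun n => eConvPow_ne_top hstep n g]

lemma eGreen_ne_top_of_summable (hnn : ∀ g, 0 ≤ step g)
    (hstep : ∑' g, ENNReal.ofReal (step g) ≤ 1) {g : G}
    (hsumm : Summable fun n => convPow step n g) :
    eGreen (fun g => ENNReal.ofReal (step g)) g ≠ ∞ := by
  have hofReal (n : ℕ) : eConvPow (fun g => ENNReal.ofReal (step g)) n g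
      = ENNReal.ofReal (convPow step n g) := by
    rw [convPow_eq_toReal_eConvPow hnn hstep, ENNReal.ofReal_toReal (eConvPow_ne_top hstep n g)]
  rw [eGreen, tsum_congr hofReal, ← ENNReal.ofReal_tsum_of_nonneg _ hsumm]
  · exact ENNReal.ofReal_ne_top
  · intro n
    rw [convPow_eq_toReal_eConvPow hnn hstep]
    exact ENNReal.toReal_nonneg

end RealStep

section FreeProductWalk

variable {d : ℕ} {β : ℝ} {stepY : Multiplicative (Fin d → ℤ) → ℝ}

lemma coprodStep_nonneg (hβ0 : 0 ≤ β) (hβ1 : β ≤ 1) (hnn : ∀ z, 0 ≤ stepY z)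
    (g : Monoid.Coprod (Multiplicative (Fin d → ℤ)) (Multiplicative (ZMod 2))) :
    0 ≤ coprodStep d β stepY g := by
  have h1 : 0 ≤ 1 - β := by linarith
  have h2 : 0 ≤ ∑' z, if g = Monoid.Coprod.inl z then stepY z else 0 :=
    tsum_nonneg fun z => by split_ifs <;> simp [hnn]
  unfold coprodStep
  positivity

lemma ofReal_coprodStep (hβ0 : 0 ≤ β) (hβ1 : β ≤ 1) (hnn : ∀ z, 0 ≤ stepY z)
    (g : Monoid.Coprod (Multiplicative (Fin d → ℤ)) (Multiplicative (ZMod 2))) :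
    ENNReal.ofReal (coprodStep d β stepY g) = eCoprodStep (ENNReal.ofReal β)
      (Multiplicative.ofAdd (1 : ZMod 2)) (fun z => ENNReal.ofReal (stepY z)) g := by
  have hinl : ENNReal.ofReal (∑' z, if g = Monoid.Coprod.inl z then stepY z else 0)
      = ∑' z, if g = Monoid.Coprod.inl z then ENNReal.ofReal (stepY z) else 0 := by
    by_cases hg : ∃ w, g = Monoid.Coprod.inl w
    · obtain ⟨w, rfl⟩ := hg
      simp [Monoid.Coprod.inl_injective.eq_iff]
    · simp [not_exists.mp hg]
  have h1 : 0 ≤ 1 - β := by linarith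
  have h2 : 0 ≤ ∑' z, if g = Monoid.Coprod.inl z then stepY z else 0 :=
    tsum_nonneg fun z => by split_ifs <;> simp [hnn]
  rw [coprodStep, eCoprodStep, ENNReal.ofReal_add (by positivity) (by positivity),
    ENNReal.ofReal_mul hβ0, ENNReal.ofReal_mul h1, hinl, ENNReal.ofReal_sub 1 hβ0,
    ENNReal.ofReal_one]
  split_ifs <;> simp

lemma tsum_ofReal_coprodStep_le_one (hβ0 : 0 ≤ β) (hβ1 : β ≤ 1) (hnn : ∀ z, 0 ≤ stepY z)
    (hY : ∑' z, ENNReal.ofReal (stepY z) ≤ 1) :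
    ∑' g, ENNReal.ofReal (coprodStep d β stepY g) ≤ 1 := by
  simp_rw [ofReal_coprodStep hβ0 hβ1 hnn, tsum_eCoprodStep]
  calc _ ≤ ENNReal.ofReal β + (1 - ENNReal.ofReal β) * 1 := by gcongr
    _ = 1 := by rw [mul_one, add_tsub_cancel_of_le (ENNReal.ofReal_le_one.2 hβ1)]

lemma eGreen_ofReal_coprodStep_le (hβ0 : 0 ≤ β) (hβ1 : β < 1) (hnn : ∀ z, 0 ≤ stepY z)
    (g : Monoid.Coprod (Multiplicative (Fin d → ℤ)) (Multiplicative (ZMod 2))) :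
    eGreen (fun g => ENNReal.ofReal (coprodStep d β stepY g)) g
      ≤ ENNReal.ofReal (1 - β)⁻¹ *
          eGreen (fun z => ENNReal.ofReal (stepY z)) (Monoid.Coprod.fst g) := by
  rw [ENNReal.ofReal_inv_of_pos (by linarith), ENNReal.ofReal_sub 1 hβ0, ENNReal.ofReal_one]
  simp_rw [ofReal_coprodStep hβ0 hβ1.le hnn]
  exact eGreen_eCoprodStep_le _ _ (ENNReal.ofReal_lt_one.2 hβ1) g

lemma eGreen_ofReal_coprodStep_ne_top (hβ0 : 0 ≤ β) (hβ1 : β < 1) (hnn : ∀ z, 0 ≤ stepY z)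
    (hY : ∑' z, ENNReal.ofReal (stepY z) ≤ 1) (htrans : Summable fun n => convPow stepY n 1) :
    eGreen (fun g => ENNReal.ofReal (coprodStep d β stepY g)) 1 ≠ ∞ :=
  ne_top_of_le_ne_top
    (ENNReal.mul_ne_top ENNReal.ofReal_ne_top
      (by simpa using eGreen_ne_top_of_summable hnn hY htrans))
    (eGreen_ofReal_coprodStep_le hβ0 hβ1 hnn 1)

lemma tsum_convPow_coprodStep_le (hβ0 : 0 ≤ β) (hβ1 : β < 1) (hnn : ∀ z, 0 ≤ stepY z)
    (hY : ∑' z, ENNReal.ofReal (stepY z) ≤ 1) (htrans : Summable fun n => convPow stepY n 1) :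
    ∑' n, convPow (coprodStep d β stepY) n 1 ≤ (1 - β)⁻¹ * ∑' n, convPow stepY n 1 := by
  rw [tsum_convPow_eq_toReal_eGreen (coprodStep_nonneg hβ0 hβ1.le hnn)
      (tsum_ofReal_coprodStep_le_one hβ0 hβ1.le hnn hY),
    tsum_convPow_eq_toReal_eGreen hnn hY,
    ← ENNReal.toReal_ofReal (inv_nonneg.2 (sub_nonneg.2 hβ1.le)),
    ← ENNReal.toReal_mul]
  refine ENNReal.toReal_mono ?_ (by simpa using eGreen_ofReal_coprodStep_le hβ0 hβ1 hnn 1)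
  exact ENNReal.mul_ne_top ENNReal.ofReal_ne_top (eGreen_ne_top_of_summable hnn hY htrans)

lemma tsum_convPow_mul_pow_le_tsum_convPow_coprodStep (hβ0 : 0 ≤ β) (hβ1 : β < 1)
    (hnn : ∀ z, 0 ≤ stepY z) (hY : ∑' z, ENNReal.ofReal (stepY z) ≤ 1)
    (htrans : Summable fun n => convPow stepY n 1) :
    ∑' n, convPow stepY n 1 * (1 - β) ^ n ≤ ∑' n, convPow (coprodStep d β stepY) n 1 := by
  have hc : 1 - ENNReal.ofReal β = ENNReal.ofReal (1 - β) := by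
    rw [ENNReal.ofReal_sub 1 hβ0, ENNReal.ofReal_one]
  have hlower (n : ℕ) : convPow stepY n 1 * (1 - β) ^ n
      = ((1 - ENNReal.ofReal β) ^ n * eConvPow (fun z => ENNReal.ofReal (stepY z)) n 1).toReal := by
    rw [ENNReal.toReal_mul, ENNReal.toReal_pow, hc, ENNReal.toReal_ofReal (by linarith),
      convPow_eq_toReal_eConvPow hnn hY, mul_comm]
  rw [tsum_congr hlower, tsum_convPow_eq_toReal_eGreen (coprodStep_nonneg hβ0 hβ1.le hnn)
      (tsum_ofReal_coprodStep_le_one hβ0 hβ1.le hnn hY),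
    ← ENNReal.tsum_toReal_eq fun n => ENNReal.mul_ne_top (ENNReal.pow_ne_top
      (ENNReal.sub_ne_top ENNReal.one_ne_top)) (eConvPow_ne_top hY n 1)]
  refine ENNReal.toReal_mono (eGreen_ofReal_coprodStep_ne_top hβ0 hβ1 hnn hY htrans) ?_
  refine ENNReal.tsum_le_tsum fun n => ?_
  simp_rw [ofReal_coprodStep hβ0 hβ1.le hnn]
  simpa using pow_mul_eConvPow_le_eConvPow_eCoprodStep (ENNReal.ofReal β)
    (Multiplicative.ofAdd (1 : ZMod 2)) (fun z => ENNReal.ofReal (stepY z)) n 1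

end FreeProductWalk

theorem stmt18_general (d : ℕ)
    (stepY : Multiplicative (Fin d → ℤ) → ℝ)
    (hnn : ∀ z, 0 ≤ stepY z) (hsum : ∑' z, stepY z = 1)
    (htrans : Summable fun n : ℕ => convPow stepY n 1) :
    Filter.Tendsto (fun β : ℝ => ∑' n : ℕ, convPow (coprodStep d β stepY) n 1)
      (nhdsWithin 0 (Set.Ioi 0)) (nhds (∑' n : ℕ, convPow stepY n 1)) := by
  have hY : ∑' z, ENNReal.ofReal (stepY z) ≤ 1 := (tsum_ofReal_eq_one hnn hsum).le
  have hIoo : ∀ᶠ β in 𝓝[>] (0 : ℝ), β ∈ Set.Ioo 0 1 := Ioo_mem_nhdsGT one_pos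
  have hone_sub : Tendsto (fun β : ℝ => 1 - β) (𝓝[>] 0) (𝓝[<] 1) := by
    refine tendsto_nhdsWithin_of_tendsto_nhds_of_eventually_within _ ?_ ?_
    · simpa using ((continuous_sub_left (1 : ℝ)).tendsto 0).mono_left nhdsWithin_le_nhds
    · filter_upwards [self_mem_nhdsWithin] with β (hβ : 0 < β)
      simpa using hβ
  have hupper : Tendsto (fun β : ℝ => (1 - β)⁻¹ * ∑' n, convPow stepY n 1) (𝓝[>] 0)
      (𝓝 (∑' n, convPow stepY n 1)) := by
    have hcont : ContinuousAt (fun β : ℝ => (1 - β)⁻¹ * ∑' n, convPow stepY n 1) 0 := by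
      fun_prop (disch := norm_num)
    simpa using hcont.tendsto.mono_left nhdsWithin_le_nhds
  exact tendsto_of_tendsto_of_tendsto_of_le_of_le'
    ((Real.tendsto_tsum_powerSeries_nhdsWithin_lt htrans.hasSum.tendsto_sum_nat).comp hone_sub)
    hupper
    (hIoo.mono fun β hβ =>
      tsum_convPow_mul_pow_le_tsum_convPow_coprodStep hβ.1.le hβ.2 hnn hY htrans)
    (hIoo.mono fun β hβ => tsum_convPow_coprodStep_le hβ.1.le hβ.2 hnn hY htrans)

/-- `Ĝ_β → Ĝ` as `β → 0⁺`: the expected number of returns to the identity of the random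
walk on `ℤ^d ∗ ℤ₂` with `ℤ₂`-step probability `β` converges, as `β → 0`, to the expected
number of returns to `0` of the walk on `ℤ^d`. -/
theorem stmt18 (d : ℕ) (hd : 3 ≤ d)
    (stepY : Multiplicative (Fin d → ℤ) → ℝ)
    (hnn : ∀ z, 0 ≤ stepY z) (hsum : ∑' z, stepY z = 1)
    (hsymm : ∀ z, stepY z = stepY z⁻¹)
    (htrans : Summable fun n : ℕ => convPow stepY n 1) :
    Filter.Tendsto (fun β : ℝ => ∑' n : ℕ, convPow (coprodStep d β stepY) n 1)
      (nhdsWithin 0 (Set.Ioi 0)) (nhds (∑' n : ℕ, convPow stepY n 1)) :=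
  stmt18_general d stepY hnn hsum htrans
end
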